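/- Let ζ be a stochastic process on a probability space (Ω, ℱ, P) indexed by [0,1] such that ζ(·,t) is measurable for each t ∈ [0,1], the sample path ζ(ω,·) is continuous for each ω ∈ Ω, ζ is a Gaussian process (every finite real linear combination Σᵢ cᵢ ζ(·,tᵢ) has a possibly degenerate Gaussian distribution on ℝ), and the map ω ↦ ζ(ω,·) is measurable into C([0,1],ℝ). Then for every finite signed Borel measure η on [0,1], the real random variable ω ↦ ∫_{[0,1]} ζ(ω,t) dη(t) has a (possibly degenerate) Gaussian distribution. -/

import Mathlib

/-!
Replacing `t` by finitely-valued measurable approximations `gₙ t → t`,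
`∫ ζ(ω, gₙ t) dη(t)` is a finite linear combination of values of `ζ`, hence Gaussian, and it
converges to `∫ ζ(ω, t) dη(t)` for every `ω` by dominated convergence.

Gaussian laws on `ℝ` are closed under such limits. The characteristic functions
`exp (i t mₙ - vₙ t² / 2)` converge to that of the limit, which does not vanish near `0`; their
moduli force `vₙ` to converge. The convergence of characteristic functions gives tightness, which
with Chebyshev's inequality bounds `mₙ`. Along a subsequence on which `mₙ` converges, the limit
characteristic function is that of a Gaussian.
-/

open MeasureTheory ProbabilityTheory
open scoped NNReal

noncomputable instance : MeasurableSpace C(Set.Icc (0:ℝ) 1, ℝ) := borel _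
instance : BorelSpace C(Set.Icc (0:ℝ) 1, ℝ) := ⟨rfl⟩

/-- Integral of a function with respect to a finite signed Borel measure on `[0,1]`,
defined via the Jordan decomposition `η = η⁺ - η⁻`. -/
noncomputable def sintegral (η : SignedMeasure (Set.Icc (0:ℝ) 1))
    (x : Set.Icc (0:ℝ) 1 → ℝ) : ℝ :=
  (∫ t, x t ∂η.toJordanDecomposition.posPart) -
    ∫ t, x t ∂η.toJordanDecomposition.negPart

open Filter Topology
open scoped ENNReal

lemma norm_charFun_gaussianReal (m : ℝ) (v : ℝ≥0) (t : ℝ) :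
    ‖charFun (gaussianReal m v) t‖ = Real.exp (-(v * t ^ 2 / 2)) := by
  rw [charFun_gaussianReal, Complex.norm_exp]
  congr 1
  simp [← Complex.ofReal_pow]

lemma exists_ne_zero_charFun_ne_zero (μ : Measure ℝ) [IsProbabilityMeasure μ] :
    ∃ t ≠ 0, charFun μ t ≠ 0 := by
  have hev : ∀ᶠ t in 𝓝[≠] 0, charFun μ t ≠ 0 :=
    (continuous_charFun.continuousAt.eventually_ne (by simp)).filter_mono nhdsWithin_le_nhds
  obtain ⟨t, ht, ht0⟩ := (hev.and eventually_mem_nhdsWithin).exists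
  exact ⟨t, ht0, ht⟩

lemma exists_tendsto_variance_of_tendsto_charFun_gaussianReal {μ : Measure ℝ}
    [IsProbabilityMeasure μ] {m : ℕ → ℝ} {v : ℕ → ℝ≥0}
    (h : ∀ t, Tendsto (fun n ↦ charFun (gaussianReal (m n) (v n)) t) atTop (𝓝 (charFun μ t))) :
    ∃ v₀ : ℝ≥0, Tendsto v atTop (𝓝 v₀) := by
  obtain ⟨t, ht, hμt⟩ := exists_ne_zero_charFun_ne_zero μ
  have hexp : Tendsto (fun n ↦ -(v n * t ^ 2 / 2)) atTop (𝓝 (Real.log ‖charFun μ t‖)) := by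
    have := (Real.continuousAt_log (norm_ne_zero_iff.mpr hμt)).tendsto.comp (h t).norm
    simpa [Function.comp_def, norm_charFun_gaussianReal] using this
  have hv : Tendsto (fun n ↦ (v n : ℝ)) atTop (𝓝 (-2 * Real.log ‖charFun μ t‖ / t ^ 2)) := by
    refine (hexp.const_mul (-2) |>.div_const (t ^ 2)).congr fun n ↦ ?_
    field_simp
  refine ⟨(-2 * Real.log ‖charFun μ t‖ / t ^ 2).toNNReal, ?_⟩
  rw [← NNReal.tendsto_coe, Real.coe_toNNReal _ (ge_of_tendsto' hv fun n ↦ (v n).2)]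
  exact hv

lemma gaussianReal_setOf_le_abs_sub_le (m : ℝ) (v : ℝ≥0) {a : ℝ} (ha : 0 < a) :
    gaussianReal m v {x | a ≤ |x - m|} ≤ ENNReal.ofReal (v / a ^ 2) := by
  have := meas_ge_le_variance_div_sq (μ := gaussianReal m v) (memLp_id_gaussianReal 2) ha
  simpa [integral_id_gaussianReal, variance_id_gaussianReal] using this

lemma abs_le_of_gaussianReal_compl_closedBall_le {m : ℝ} {v : ℝ≥0} {R V : ℝ} (hv : (v : ℝ) ≤ V)
    (hR : gaussianReal m v (Metric.closedBall 0 R)ᶜ ≤ 2⁻¹) : |m| ≤ R + (V + 1) := by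
  by_contra! hm
  have hV : 0 ≤ V := v.2.trans hv
  have hcover : Set.univ ⊆ {x | V + 1 ≤ |x - m|} ∪ (Metric.closedBall 0 R)ᶜ := by
    refine fun x _ ↦ (em (x ∈ Metric.closedBall 0 R)).imp (fun hx ↦ ?_) id
    rw [Metric.mem_closedBall, dist_zero_right, Real.norm_eq_abs] at hx
    have := abs_sub_abs_le_abs_sub m x
    show V + 1 ≤ |x - m|
    rw [abs_sub_comm]
    linarith
  have hsmall : (v : ℝ) / (V + 1) ^ 2 < 2⁻¹ := by
    rw [div_lt_iff₀ (by positivity)]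
    nlinarith
  have := calc (1 : ℝ≥0∞) = gaussianReal m v Set.univ := measure_univ.symm
    _ ≤ gaussianReal m v {x | V + 1 ≤ |x - m|} + gaussianReal m v (Metric.closedBall 0 R)ᶜ :=
        (measure_mono hcover).trans (measure_union_le _ _)
    _ < 2⁻¹ + 2⁻¹ := by
        refine ENNReal.add_lt_add_of_lt_of_le (by simp) ?_ hR
        refine (gaussianReal_setOf_le_abs_sub_le m v (by linarith)).trans_lt ?_
        rw [show (2⁻¹ : ℝ≥0∞) = ENNReal.ofReal 2⁻¹ by simp]
        exact (ENNReal.ofReal_lt_ofReal_iff (by norm_num)).mpr hsmall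
  rw [ENNReal.inv_two_add_inv_two] at this
  exact lt_irrefl _ this

lemma exists_eq_gaussianReal_of_tendsto_charFun {μ : Measure ℝ} [IsProbabilityMeasure μ]
    {m : ℕ → ℝ} {v : ℕ → ℝ≥0}
    (h : ∀ t, Tendsto (fun n ↦ charFun (gaussianReal (m n) (v n)) t) atTop (𝓝 (charFun μ t))) :
    ∃ (m₀ : ℝ) (v₀ : ℝ≥0), μ = gaussianReal m₀ v₀ := by
  obtain ⟨v₀, hv⟩ := exists_tendsto_variance_of_tendsto_charFun_gaussianReal h
  obtain ⟨V, hV⟩ := (NNReal.tendsto_coe.mpr hv).bddAbove_range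
  obtain ⟨K, hK, hKμ⟩ := isTightMeasureSet_iff_exists_isCompact_measure_compl_le.mp
    (isTightMeasureSet_of_tendsto_charFun continuous_charFun.continuousAt h) 2⁻¹ (by simp)
  obtain ⟨R, hKR⟩ := hK.isBounded.subset_closedBall 0
  have hm : ∀ n, m n ∈ Metric.closedBall 0 (R + (V + 1)) := fun n ↦ by
    rw [Metric.mem_closedBall, dist_zero_right, Real.norm_eq_abs]
    refine abs_le_of_gaussianReal_compl_closedBall_le (hV ⟨n, rfl⟩) ?_
    exact (measure_mono (Set.compl_subset_compl.mpr hKR)).trans (hKμ _ ⟨n, rfl⟩)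
  obtain ⟨m₀, -, φ, hφ, hmφ⟩ := tendsto_subseq_of_bounded Metric.isBounded_closedBall hm
  refine ⟨m₀, v₀, Measure.ext_of_charFun (funext fun t ↦ ?_)⟩
  refine tendsto_nhds_unique ((h t).comp hφ.tendsto_atTop) ?_
  simp only [Function.comp_def, charFun_gaussianReal]
  have hm' : Tendsto (fun n ↦ (m (φ n) : ℂ)) atTop (𝓝 m₀) :=
    (Complex.continuous_ofReal.tendsto m₀).comp hmφ
  have hv' : Tendsto (fun n ↦ ((v (φ n) : ℝ) : ℂ)) atTop (𝓝 (v₀ : ℝ)) :=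
    (Complex.continuous_ofReal.tendsto _).comp ((NNReal.tendsto_coe.mpr hv).comp hφ.tendsto_atTop)
  exact (((tendsto_const_nhds.mul hm').mul_const _).sub ((hv'.mul_const _).div_const _)).cexp

lemma exists_map_eq_gaussianReal_of_ae_tendsto {Ω : Type*} [MeasurableSpace Ω] {P : Measure Ω}
    [IsProbabilityMeasure P] {X : ℕ → Ω → ℝ} {Y : Ω → ℝ} (hX : ∀ n, AEMeasurable (X n) P)
    (hY : AEMeasurable Y P) (hlim : ∀ᵐ ω ∂P, Tendsto (fun n ↦ X n ω) atTop (𝓝 (Y ω)))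
    (hgauss : ∀ n, ∃ (m : ℝ) (v : ℝ≥0), P.map (X n) = gaussianReal m v) :
    ∃ (m : ℝ) (v : ℝ≥0), P.map Y = gaussianReal m v := by
  choose m v hmv using hgauss
  have := Measure.isProbabilityMeasure_map hY
  refine exists_eq_gaussianReal_of_tendsto_charFun (m := m) (v := v) fun t ↦ ?_
  have hdist := (tendstoInDistribution_of_ae_tendsto hX hY hlim).tendsto
  simpa [← hmv] using ProbabilityMeasure.tendsto_iff_tendsto_charFun.mp hdist t

lemma MeasureTheory.SimpleFunc.integral_comp_eq_sum {α β E : Type*} [MeasurableSpace α]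
    [MeasurableSpace β] [NormedAddCommGroup E] [NormedSpace ℝ E] [CompleteSpace E]
    {μ : Measure α} [IsFiniteMeasure μ] (g : SimpleFunc α β) (f : β → E) :
    ∫ a, f (g a) ∂μ = ∑ y ∈ g.range, μ.real (g ⁻¹' {y}) • f y := by
  have hsum : (fun a ↦ f (g a)) = fun a ↦ ∑ y ∈ g.range, (g ⁻¹' {y}).indicator (fun _ ↦ f y) a := by
    funext a
    rw [Finset.sum_eq_single_of_mem (g a) (g.mem_range_self a)]
    · simp
    · exact fun y _ hy ↦ Set.indicator_of_notMem (by simpa using Ne.symm hy) _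
  rw [hsum, integral_finsetSum _ fun y _ ↦
    (integrable_const _).indicator (g.measurableSet_preimage _)]
  exact Finset.sum_congr rfl fun y _ ↦ integral_indicator_const _ (g.measurableSet_preimage _)

lemma tendsto_integral_comp_of_tendsto {T E : Type*} [MetricSpace T] [CompactSpace T]
    [MeasurableSpace T] [BorelSpace T] [NormedAddCommGroup E] [NormedSpace ℝ E]
    {μ : Measure T} [IsFiniteMeasure μ] (f : C(T, E)) {g : ℕ → T → T}
    (hg : ∀ n, Measurable (g n)) (hlim : ∀ t, Tendsto (fun n ↦ g n t) atTop (𝓝 t)) :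
    Tendsto (fun n ↦ ∫ t, f (g n t) ∂μ) atTop (𝓝 (∫ t, f t ∂μ)) :=
  tendsto_integral_of_dominated_convergence (fun _ ↦ ‖f‖)
    (fun n ↦ (f.continuous.stronglyMeasurable.comp_measurable (hg n)).aestronglyMeasurable)
    (integrable_const _) (fun _ ↦ ae_of_all _ fun _ ↦ f.norm_coe_le_norm _)
    (ae_of_all _ fun t ↦ (f.continuous.tendsto t).comp (hlim t))

theorem exists_map_integral_sub_integral_eq_gaussianReal {Ω T : Type*} [MeasurableSpace Ω]
    {P : Measure Ω} [IsProbabilityMeasure P] [MetricSpace T] [CompactSpace T] [Nonempty T]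
    [MeasurableSpace T] [BorelSpace T] {ζ : Ω → T → ℝ} (hmeas : ∀ t, Measurable fun ω ↦ ζ ω t)
    (hcont : ∀ ω, Continuous (ζ ω))
    (hgauss : ∀ (s : Finset T) (c : T → ℝ),
      ∃ (m : ℝ) (v : ℝ≥0), P.map (fun ω ↦ ∑ t ∈ s, c t * ζ ω t) = gaussianReal m v)
    (μ ν : Measure T) [IsFiniteMeasure μ] [IsFiniteMeasure ν] :
    ∃ (m : ℝ) (v : ℝ≥0), P.map (fun ω ↦ ∫ t, ζ ω t ∂μ - ∫ t, ζ ω t ∂ν) = gaussianReal m v := by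
  let g n := SimpleFunc.approxOn id measurable_id Set.univ (Classical.arbitrary T) trivial n
  have hg : ∀ t, Tendsto (fun n ↦ g n t) atTop (𝓝 t) := fun t ↦
    SimpleFunc.tendsto_approxOn measurable_id _ (by simp)
  let X n ω := ∑ y ∈ (g n).range, (μ.real (g n ⁻¹' {y}) - ν.real (g n ⁻¹' {y})) * ζ ω y
  have hX : ∀ n ω, X n ω = ∫ t, ζ ω (g n t) ∂μ - ∫ t, ζ ω (g n t) ∂ν := fun n ω ↦ by
    simp only [X, SimpleFunc.integral_comp_eq_sum, ← Finset.sum_sub_distrib, sub_mul, smul_eq_mul]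
  have hlim : ∀ ω, Tendsto (fun n ↦ X n ω) atTop (𝓝 (∫ t, ζ ω t ∂μ - ∫ t, ζ ω t ∂ν)) := by
    intro ω
    simp only [hX]
    exact (tendsto_integral_comp_of_tendsto ⟨ζ ω, hcont ω⟩ (fun n ↦ (g n).measurable) hg).sub
      (tendsto_integral_comp_of_tendsto ⟨ζ ω, hcont ω⟩ (fun n ↦ (g n).measurable) hg)
  have hXm : ∀ n, Measurable (X n) := fun n ↦
    Finset.measurable_sum _ fun y _ ↦ (hmeas y).const_mul _
  exact exists_map_eq_gaussianReal_of_ae_tendsto (fun n ↦ (hXm n).aemeasurable)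
    (measurable_of_tendsto_metrizable hXm (tendsto_pi_nhds.mpr hlim)).aemeasurable
    (ae_of_all _ hlim) fun n ↦ hgauss _ _

theorem stmt2_general {Ω : Type*} [MeasurableSpace Ω] (P : Measure Ω) [IsProbabilityMeasure P]
    (ζ : Ω → Set.Icc (0:ℝ) 1 → ℝ)
    (hmeas : ∀ t : Set.Icc (0:ℝ) 1, Measurable fun ω => ζ ω t)
    (hcont : ∀ ω, Continuous (ζ ω))
    (hgauss : ∀ (k : ℕ) (t : Fin k → Set.Icc (0:ℝ) 1) (c : Fin k → ℝ),
      ∃ (m : ℝ) (v : ℝ≥0),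
        P.map (fun ω => ∑ i, c i * ζ ω (t i)) = gaussianReal m v) :
    ∀ η : SignedMeasure (Set.Icc (0:ℝ) 1),
      ∃ (m : ℝ) (v : ℝ≥0),
        P.map (fun ω => sintegral η (ζ ω)) = gaussianReal m v := by
  intro η
  have hgauss_finset : ∀ (s : Finset (Set.Icc (0:ℝ) 1)) (c : Set.Icc (0:ℝ) 1 → ℝ),
      ∃ (m : ℝ) (v : ℝ≥0), P.map (fun ω ↦ ∑ t ∈ s, c t * ζ ω t) = gaussianReal m v := by
    intro s c
    obtain ⟨m, v, h⟩ := hgauss s.card (fun i ↦ s.equivFin.symm i) (fun i ↦ c (s.equivFin.symm i))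
    refine ⟨m, v, ?_⟩
    convert h using 3 with ω
    rw [← Finset.sum_coe_sort s]
    exact (s.equivFin.symm.sum_comp fun t : s ↦ c t * ζ ω t).symm
  exact exists_map_integral_sub_integral_eq_gaussianReal hmeas hcont hgauss_finset _ _

/-- If `ζ` is a Gaussian process on `[0,1]` with continuous sample paths and
the induced map `ω ↦ ζ(ω,·)` is measurable into `C([0,1],ℝ)`, then for every finite signed
Borel measure `η` on `[0,1]`, the random variable `ω ↦ ∫ ζ(ω,t) dη(t)` has a (possibly
degenerate) Gaussian distribution. -/
theorem stmt2 {Ω : Type*} [MeasurableSpace Ω] (P : Measure Ω) [IsProbabilityMeasure P]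
    (ζ : Ω → Set.Icc (0:ℝ) 1 → ℝ)
    (hmeas : ∀ t : Set.Icc (0:ℝ) 1, Measurable fun ω => ζ ω t)
    (hcont : ∀ ω, Continuous (ζ ω))
    (hζmeas : Measurable fun ω => (⟨ζ ω, hcont ω⟩ : C(Set.Icc (0:ℝ) 1, ℝ)))
    (hgauss : ∀ (k : ℕ) (t : Fin k → Set.Icc (0:ℝ) 1) (c : Fin k → ℝ),
      ∃ (m : ℝ) (v : ℝ≥0),
        P.map (fun ω => ∑ i, c i * ζ ω (t i)) = gaussianReal m v) :
    ∀ η : SignedMeasure (Set.Icc (0:ℝ) 1),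
      ∃ (m : ℝ) (v : ℝ≥0),
        P.map (fun ω => sintegral η (ζ ω)) = gaussianReal m v :=
  stmt2_general P ζ hmeas hcont hgauss
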